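/- arXiv:1811.08261 — 2 statements merged into one kernel-verified Lean document; each statement's English description precedes it below -/
import Mathlib

section
/- ∑_{m,n≥0} q^{(3m²+m)/2 + 2mn + n²} / ((q;q)_m (q^4;q^4)_{⌊n/2⌋}) = ∑_{m,n≥0} q^{2m² + 2mn + n²} / ((q^2;q^2)_m (q^2;q^2)_n) as formal power series (or for |q| < 1). -/
open Finset

/-- Finite q-Pochhammer symbol `(a; q)_n = ∏_{j=0}^{n-1} (1 - a q^j)`. -/
noncomputable def qPoch (a q : ℂ) (n : ℕ) : ℂ := ∏ j ∈ Finset.range n, (1 - a * q ^ j)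

/-- Infinite q-Pochhammer symbol `(a; q)_∞`. -/
noncomputable def qPochInf (a q : ℂ) : ℂ := ∏' j : ℕ, (1 - a * q ^ j)

/-- Gaussian binomial coefficient `[a choose b]_q`, equal to
`(q;q)_a / ((q;q)_b (q;q)_{a-b})` when `a ≥ b ≥ 0`, and `0` otherwise. -/
noncomputable def qbinom (q : ℂ) (a b : ℤ) : ℂ :=
  if 0 ≤ b ∧ b ≤ a then
    qPoch q q a.toNat / (qPoch q q b.toNat * qPoch q q (a - b).toNat)
  else 0

/-!
Grouping both double sums by `N = m + n` pulls out the factor `q ^ N²`; what is left is the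
`N`-th coefficient of a power series in an auxiliary variable `z`, namely
`F(z) = (-zq; q)_∞ (1 + z) / (z²; q⁴)_∞` on the left and `G(z) = (-zq; q²)_∞ / (z; q²)_∞` on
the right, expanded by Euler's formulas (`eulerSeries`, `invPochSeries`). Both `H = F, G`
satisfy `H(z) (1 - z) = (1 + qz) H(q²z)`, for `F` because `(1 + z)(1 - z) = 1 - z²` and
`(-zq; q)_∞ = (1 + qz)(1 + q²z)(-zq³; q)_∞`. As `1 - q^(2n) ≠ 0`, this functional equation
determines the coefficients from the constant term `1`.
-/

open PowerSeries

lemma qPoch_self_succ (r : ℂ) (n : ℕ) : qPoch r r (n + 1) = qPoch r r n * (1 - r ^ (n + 1)) := by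
  rw [qPoch, prod_range_succ, ← pow_succ']; rfl

lemma norm_pow_lt_one {r : ℂ} (hr : ‖r‖ < 1) {k : ℕ} (hk : k ≠ 0) : ‖r ^ k‖ < 1 := by
  rw [norm_pow]; exact pow_lt_one₀ (norm_nonneg r) hr hk

lemma one_sub_pow_succ_ne_zero {r : ℂ} (hr : ‖r‖ < 1) (n : ℕ) : 1 - r ^ (n + 1) ≠ 0 := by
  rw [sub_ne_zero]
  intro h
  simpa [← h] using norm_pow_lt_one hr n.succ_ne_zero

lemma qPoch_self_ne_zero {r : ℂ} (hr : ‖r‖ < 1) (n : ℕ) : qPoch r r n ≠ 0 := by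
  induction n with
  | zero => simp [qPoch]
  | succ n ih => rw [qPoch_self_succ]; exact mul_ne_zero ih (one_sub_pow_succ_ne_zero hr n)

lemma inv_one_sub_le_exp {x t : ℝ} (hx : 0 ≤ x) (hxt : x ≤ t) (ht : t < 1) :
    (1 - x)⁻¹ ≤ Real.exp (x / (1 - t)) := by
  have h1t : 0 < 1 - t := by linarith
  calc (1 - x)⁻¹ = x / (1 - x) + 1 := by field_simp [show 1 - x ≠ 0 by linarith]; ring
    _ ≤ x / (1 - t) + 1 := by gcongr
    _ ≤ Real.exp (x / (1 - t)) := Real.add_one_le_exp _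

lemma norm_inv_qPoch_self_le {r : ℂ} {t : ℝ} (hr : ‖r‖ ≤ t) (ht : t < 1) (n : ℕ) :
    ‖(qPoch r r n)⁻¹‖ ≤ Real.exp (t / (1 - t) ^ 2) := by
  have ht0 : 0 ≤ t := (norm_nonneg r).trans hr
  have hpow : ∀ j : ℕ, t ^ (j + 1) ≤ t := fun j => pow_le_of_le_one ht0 ht.le j.succ_ne_zero
  have hfactor : ∀ j ∈ range n, ‖(1 - r * r ^ j)⁻¹‖ ≤ Real.exp (t ^ (j + 1) / (1 - t)) := by
    intro j _
    have hlow : 1 - t ^ (j + 1) ≤ ‖1 - r * r ^ j‖ := by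
      have h₁ := norm_sub_norm_le (1 : ℂ) (r ^ (j + 1))
      have h₂ : ‖r‖ ^ (j + 1) ≤ t ^ (j + 1) := pow_le_pow_left₀ (norm_nonneg r) hr _
      rw [norm_pow, norm_one] at h₁
      rw [← pow_succ']
      linarith
    rw [norm_inv]
    calc ‖1 - r * r ^ j‖⁻¹ ≤ (1 - t ^ (j + 1))⁻¹ := inv_anti₀ (by linarith [hpow j]) hlow
      _ ≤ _ := inv_one_sub_le_exp (pow_nonneg ht0 _) (hpow j) ht
  have hsum : ∑ j ∈ range n, t ^ (j + 1) ≤ t / (1 - t) := by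
    simpa only [sum_Ico_eq_sum_range, add_tsub_cancel_right, pow_one, add_comm 1] using
      geom_sum_Ico_le_of_lt_one (m := 1) (n := n + 1) ht0 ht
  rw [qPoch, ← prod_inv_distrib, norm_prod]
  calc ∏ j ∈ range n, ‖(1 - r * r ^ j)⁻¹‖
      ≤ ∏ j ∈ range n, Real.exp (t ^ (j + 1) / (1 - t)) :=
        prod_le_prod (fun _ _ => norm_nonneg _) hfactor
    _ = Real.exp ((∑ j ∈ range n, t ^ (j + 1)) / (1 - t)) := by rw [sum_div, Real.exp_sum]
    _ ≤ Real.exp (t / (1 - t) ^ 2) := by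
        rw [Real.exp_le_exp, sq, ← div_div]
        exact div_le_div_of_nonneg_right hsum (by linarith)

lemma norm_inv_qPoch_pow_le {q : ℂ} (hq : ‖q‖ < 1) {k : ℕ} (hk : k ≠ 0) (n : ℕ) :
    ‖(qPoch (q ^ k) (q ^ k) n)⁻¹‖ ≤ Real.exp (‖q‖ / (1 - ‖q‖) ^ 2) := by
  refine norm_inv_qPoch_self_le ?_ hq n
  rw [norm_pow]
  exact pow_le_of_le_one (norm_nonneg q) hq.le hk

lemma summable_pow_mul_of_bounded {q : ℂ} (hq : ‖q‖ < 1) {e : ℕ × ℕ → ℕ} {f : ℕ × ℕ → ℂ}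
    {C : ℝ} (he : ∀ p, p.1 + p.2 ≤ e p) (hf : ∀ p, ‖f p‖ ≤ C) :
    Summable fun p => q ^ e p * f p := by
  have ht := norm_nonneg q
  have hgeom := summable_geometric_of_lt_one ht hq
  refine Summable.of_norm_bounded ((hgeom.mul_of_nonneg hgeom (fun _ => by positivity)
    (fun _ => by positivity)).mul_left C) fun p => ?_
  rw [norm_mul, norm_pow, mul_comm, ← pow_add]
  exact mul_le_mul (hf p) (pow_le_pow_of_le_one ht hq.le (he p)) (by positivity)
    ((norm_nonneg _).trans (hf p))

lemma tsum_eq_tsum_sum_antidiagonal {α : Type*} [AddCommMonoid α] [TopologicalSpace α]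
    [ContinuousAdd α] [T3Space α] {f : ℕ × ℕ → α} (hf : Summable f) :
    ∑' p, f p = ∑' n, ∑ p ∈ antidiagonal n, f p := by
  rw [← HasAntidiagonal.sigmaAntidiagonalEquivProd.tsum_eq]
  refine (HasAntidiagonal.sigmaAntidiagonalEquivProd.summable_iff.mpr hf).tsum_sigma'
    (fun n => (hasSum_fintype _).summable) |>.trans ?_
  exact tsum_congr fun n => Finset.tsum_subtype _ f

lemma two_mul_choose_two_add_self (m : ℕ) : 2 * m.choose 2 + m = m ^ 2 := by
  induction m with
  | zero => rfl
  | succ m ih => rw [Nat.choose_succ_succ', Nat.choose_one_right]; grind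

namespace PowerSeries

section Rescale

variable {R : Type*} [CommRing R]

lemma rescale_C (r a : R) : rescale r (C a) = C a := by
  ext n
  simp only [coeff_rescale, coeff_C]
  split_ifs with h <;> simp [h]

lemma rescale_one_add_C_mul_X (r a : R) : rescale r (1 + C a * X) = 1 + C (a * r) * X := by
  rw [map_add, map_one, map_mul, rescale_X, rescale_C, ← mul_assoc, ← map_mul]

lemma rescale_expand_two (r : R) (f : PowerSeries R) :
    rescale r (expand 2 two_ne_zero f) = expand 2 two_ne_zero (rescale (r ^ 2) f) := by
  ext n
  simp only [coeff_rescale, coeff_expand]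
  split_ifs with h
  · obtain ⟨k, rfl⟩ := h
    rw [Nat.mul_div_cancel_left k two_pos, pow_mul]
  · rw [mul_zero]

lemma coeff_one_add_X_mul_expand_two (f : PowerSeries R) (n : ℕ) :
    coeff n ((1 + X) * expand 2 two_ne_zero f) = coeff (n / 2) f := by
  cases n with
  | zero => simp
  | succ n =>
    simp only [add_mul, one_mul, map_add, coeff_succ_X_mul, coeff_expand]
    rcases Nat.even_or_odd' n with ⟨k, rfl | rfl⟩
    · rw [if_neg (by omega), if_pos (by omega), zero_add, Nat.mul_div_cancel_left k two_pos,
        show (2 * k + 1) / 2 = k by omega]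
    · rw [if_pos (by omega), if_neg (by omega), add_zero]

end Rescale

section FunctionalEquation

variable {K : Type*} [Field K] {c r : K} {F G : PowerSeries K}

lemma coeff_succ_mul_of_functional_eq (hF : F * (1 - X) = (1 + C c * X) * rescale r F)
    (n : ℕ) : coeff (n + 1) F * (1 - r ^ (n + 1)) = (1 + c * r ^ n) * coeff n F := by
  have h := congrArg (coeff (n + 1)) hF
  simp only [mul_sub, mul_one, add_mul, one_mul, map_sub, map_add, coeff_succ_mul_X,
    mul_assoc, coeff_C_mul, coeff_succ_X_mul, coeff_rescale] at h
  linear_combination h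

lemma eq_of_functional_eq (hr : ∀ n : ℕ, r ^ (n + 1) ≠ 1)
    (hF : F * (1 - X) = (1 + C c * X) * rescale r F)
    (hG : G * (1 - X) = (1 + C c * X) * rescale r G)
    (h₀ : constantCoeff F = constantCoeff G) : F = G := by
  ext n
  induction n with
  | zero => simpa using h₀
  | succ n ih =>
    refine mul_right_cancel₀ (sub_ne_zero.mpr (hr n).symm) ?_
    rw [coeff_succ_mul_of_functional_eq hF, coeff_succ_mul_of_functional_eq hG, ih]

end FunctionalEquation

end PowerSeries

noncomputable def eulerSeries (c r : ℂ) : PowerSeries ℂ :=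
  mk fun n => c ^ n * r ^ n.choose 2 / qPoch r r n

noncomputable def invPochSeries (r : ℂ) : PowerSeries ℂ :=
  mk fun n => (qPoch r r n)⁻¹

lemma eulerSeries_eq {r : ℂ} (hr : ‖r‖ < 1) (c : ℂ) :
    eulerSeries c r = (1 + C c * X) * rescale r (eulerSeries c r) := by
  ext n
  cases n with
  | zero => rw [coeff_mul]; simp [eulerSeries, qPoch]
  | succ n =>
    have hP := qPoch_self_ne_zero hr n
    have hP' := one_sub_pow_succ_ne_zero hr n
    simp only [add_mul, one_mul, map_add, mul_assoc, coeff_C_mul, coeff_succ_X_mul,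
      coeff_rescale, eulerSeries, coeff_mk, qPoch_self_succ, Nat.choose_succ_succ',
      Nat.choose_one_right]
    field_simp
    ring

lemma invPochSeries_mul_one_sub_X {r : ℂ} (hr : ‖r‖ < 1) :
    invPochSeries r * (1 - X) = rescale r (invPochSeries r) := by
  ext n
  cases n with
  | zero => simp [invPochSeries]
  | succ n =>
    have hP := qPoch_self_ne_zero hr n
    have hP' := one_sub_pow_succ_ne_zero hr n
    simp only [mul_sub, mul_one, map_sub, coeff_succ_mul_X, coeff_rescale, invPochSeries,
      coeff_mk, qPoch_self_succ]
    field_simp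
    ring

namespace GollnitzGordon

noncomputable def leftSeries (q : ℂ) : PowerSeries ℂ :=
  eulerSeries q q * ((1 + X) * expand 2 two_ne_zero (invPochSeries (q ^ 4)))

noncomputable def rightSeries (q : ℂ) : PowerSeries ℂ :=
  eulerSeries q (q ^ 2) * invPochSeries (q ^ 2)

variable {q : ℂ}

lemma leftSeries_functional_eq (hq : ‖q‖ < 1) :
    leftSeries q * (1 - X) = (1 + C q * X) * rescale (q ^ 2) (leftSeries q) := by
  set S := eulerSeries q q
  set E := expand 2 two_ne_zero (invPochSeries (q ^ 4))
  have hS : S = (1 + C q * X) * rescale q S := eulerSeries_eq hq q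
  have hS' : rescale q S = (1 + C (q ^ 2) * X) * rescale (q ^ 2) S := by
    conv_lhs => rw [hS]
    rw [map_mul, rescale_one_add_C_mul_X, rescale_rescale, sq]
  have hE : E * (1 - X ^ 2) = rescale (q ^ 2) E := by
    rw [rescale_expand_two, ← pow_mul,
      ← invPochSeries_mul_one_sub_X (norm_pow_lt_one hq four_ne_zero), map_mul, map_sub,
      map_one, expand_X]
  have hX : rescale (q ^ 2) (1 + X) = 1 + C (q ^ 2) * X := by
    rw [map_add, map_one, rescale_X]
  rw [leftSeries, map_mul, map_mul, hX]
  linear_combination S * hE + rescale (q ^ 2) E * (hS + (1 + C q * X) * hS')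

lemma rightSeries_functional_eq (hq : ‖q‖ < 1) :
    rightSeries q * (1 - X) = (1 + C q * X) * rescale (q ^ 2) (rightSeries q) := by
  have hq2 := norm_pow_lt_one hq two_ne_zero
  rw [rightSeries, mul_assoc, invPochSeries_mul_one_sub_X hq2, map_mul]
  linear_combination rescale (q ^ 2) (invPochSeries (q ^ 2)) * eulerSeries_eq hq2 q

lemma leftSeries_eq_rightSeries (hq : ‖q‖ < 1) : leftSeries q = rightSeries q := by
  have hq2 : ∀ n : ℕ, (q ^ 2) ^ (n + 1) ≠ 1 := fun n h =>
    one_sub_pow_succ_ne_zero (norm_pow_lt_one hq two_ne_zero) n (by rw [h, sub_self])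
  refine eq_of_functional_eq hq2 (leftSeries_functional_eq hq) (rightSeries_functional_eq hq) ?_
  simp [leftSeries, rightSeries, eulerSeries, invPochSeries, qPoch]

lemma exponent_left (m n : ℕ) :
    (3 * m ^ 2 + m) / 2 + 2 * m * n + n ^ 2 = (m + n) ^ 2 + m + m.choose 2 := by
  have h := two_mul_choose_two_add_self m
  have e : (m + n) ^ 2 = m ^ 2 + 2 * m * n + n ^ 2 := by ring
  omega

lemma exponent_right (m n : ℕ) :
    2 * m ^ 2 + 2 * m * n + n ^ 2 = (m + n) ^ 2 + m + 2 * m.choose 2 := by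
  have h := two_mul_choose_two_add_self m
  have e : (m + n) ^ 2 = m ^ 2 + 2 * m * n + n ^ 2 := by ring
  omega

lemma sum_antidiagonal_left (N : ℕ) :
    ∑ p ∈ antidiagonal N, q ^ ((3 * p.1 ^ 2 + p.1) / 2 + 2 * p.1 * p.2 + p.2 ^ 2)
        / (qPoch q q p.1 * qPoch (q ^ 4) (q ^ 4) (p.2 / 2))
      = q ^ (N ^ 2) * coeff N (leftSeries q) := by
  rw [leftSeries, coeff_mul, mul_sum]
  refine sum_congr rfl fun p hp => ?_
  rw [HasAntidiagonal.mem_antidiagonal] at hp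
  rw [coeff_one_add_X_mul_expand_two, eulerSeries, invPochSeries, coeff_mk, coeff_mk,
    exponent_left, hp, pow_add, pow_add]
  ring

lemma sum_antidiagonal_right (N : ℕ) :
    ∑ p ∈ antidiagonal N, q ^ (2 * p.1 ^ 2 + 2 * p.1 * p.2 + p.2 ^ 2)
        / (qPoch (q ^ 2) (q ^ 2) p.1 * qPoch (q ^ 2) (q ^ 2) p.2)
      = q ^ (N ^ 2) * coeff N (rightSeries q) := by
  rw [rightSeries, coeff_mul, mul_sum]
  refine sum_congr rfl fun p hp => ?_
  rw [HasAntidiagonal.mem_antidiagonal] at hp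
  rw [eulerSeries, invPochSeries, coeff_mk, coeff_mk, exponent_right, hp, pow_add, pow_add,
    pow_mul]
  ring

lemma summable_left (hq : ‖q‖ < 1) :
    Summable fun p : ℕ × ℕ => q ^ ((3 * p.1 ^ 2 + p.1) / 2 + 2 * p.1 * p.2 + p.2 ^ 2)
      / (qPoch q q p.1 * qPoch (q ^ 4) (q ^ 4) (p.2 / 2)) := by
  simp only [div_eq_mul_inv]
  refine summable_pow_mul_of_bounded hq (C := Real.exp (‖q‖ / (1 - ‖q‖) ^ 2) ^ 2)
    (fun p => ?_) (fun p => ?_)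
  · rw [exponent_left]
    have := Nat.le_self_pow two_ne_zero (p.1 + p.2)
    omega
  · rw [mul_inv, norm_mul, sq (Real.exp _)]
    have h₁ := norm_inv_qPoch_pow_le hq one_ne_zero p.1
    rw [pow_one] at h₁
    exact mul_le_mul h₁ (norm_inv_qPoch_pow_le hq four_ne_zero _) (norm_nonneg _)
      (Real.exp_pos _).le

lemma summable_right (hq : ‖q‖ < 1) :
    Summable fun p : ℕ × ℕ => q ^ (2 * p.1 ^ 2 + 2 * p.1 * p.2 + p.2 ^ 2)
      / (qPoch (q ^ 2) (q ^ 2) p.1 * qPoch (q ^ 2) (q ^ 2) p.2) := by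
  simp only [div_eq_mul_inv]
  refine summable_pow_mul_of_bounded hq (C := Real.exp (‖q‖ / (1 - ‖q‖) ^ 2) ^ 2)
    (fun p => ?_) (fun p => ?_)
  · rw [exponent_right]
    have := Nat.le_self_pow two_ne_zero (p.1 + p.2)
    omega
  · rw [mul_inv, norm_mul, sq (Real.exp _)]
    exact mul_le_mul (norm_inv_qPoch_pow_le hq two_ne_zero _)
      (norm_inv_qPoch_pow_le hq two_ne_zero _) (norm_nonneg _) (Real.exp_pos _).le

end GollnitzGordon

/-- first Göllnitz–Gordon double-sum comparison (limit `N → ∞`). -/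
theorem stmt6 (q : ℂ) (hq : ‖q‖ < 1) :
    ∑' p : ℕ × ℕ, q ^ ((3 * p.1 ^ 2 + p.1) / 2 + 2 * p.1 * p.2 + p.2 ^ 2)
        / (qPoch q q p.1 * qPoch (q ^ 4) (q ^ 4) (p.2 / 2))
      = ∑' p : ℕ × ℕ, q ^ (2 * p.1 ^ 2 + 2 * p.1 * p.2 + p.2 ^ 2)
          / (qPoch (q ^ 2) (q ^ 2) p.1 * qPoch (q ^ 2) (q ^ 2) p.2) := by
  rw [tsum_eq_tsum_sum_antidiagonal (GollnitzGordon.summable_left hq),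
    tsum_eq_tsum_sum_antidiagonal (GollnitzGordon.summable_right hq)]
  refine tsum_congr fun N => ?_
  rw [GollnitzGordon.sum_antidiagonal_left, GollnitzGordon.sum_antidiagonal_right,
    GollnitzGordon.leftSeries_eq_rightSeries hq]
end

section
/- ∑_{m,n≥0} q^{2m² + 2mn + n² − m − n}(1 − q^{2m + 2n}) / ((q^2;q^2)_m (q^2;q^2)_n) = ∑_{m,n≥0} q^{2m² + 2mn + n² − m + n} / ((q^2;q^2)_m (q^2;q^2)_n) for |q| < 1. -/
open Finset

/-!
Write `a(m, n) = q ^ E(m, n) / ((q²; q²)_m (q²; q²)_n)` with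
`E(m, n) = 2m² + 2mn + n² - m - n`; the identity reads `∑ a (1 - q^(2m+2n)) = ∑ a q^(2n)`.
Since `E(m, n+1) = E(m, n) + 2m + 2n`, the shift `n ↦ n + 1` turns `a(m, n) q^(2m+2n)` into
`a(m, n+1) (1 - q^(2n+2))`, so `∑ a q^(2m+2n) = ∑ a (1 - q^(2n))` (the terms with `n = 0`
vanish), which is the identity rearranged. Absolute convergence comes from
`‖(q²; q²)_k‖ ≥ (1 - ‖q‖²)^k` and `E(m, n) ≥ m(m-1) + n(n-1)`.
-/

open Filter Topology

theorem qPoch_succ (a q : ℂ) (n : ℕ) : qPoch a q (n + 1) = qPoch a q n * (1 - a * q ^ n) :=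
  prod_range_succ _ n

theorem pow_le_norm_qPoch {a q : ℂ} (ha : ‖a‖ ≤ 1) (hq : ‖q‖ ≤ 1) (k : ℕ) :
    (1 - ‖a‖) ^ k ≤ ‖qPoch a q k‖ := by
  rw [qPoch, norm_prod]
  calc (1 - ‖a‖) ^ k = ∏ _j ∈ range k, (1 - ‖a‖) := by rw [prod_const, card_range]
    _ ≤ _ := prod_le_prod (fun _ _ => sub_nonneg.2 ha) fun j _ => ?_
  calc 1 - ‖a‖ ≤ 1 - ‖a * q ^ j‖ := by
        rw [norm_mul, norm_pow]
        gcongr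
        exact mul_le_of_le_one_right (norm_nonneg a) (pow_le_one₀ (norm_nonneg q) hq)
    _ ≤ ‖1 - a * q ^ j‖ := by simpa using norm_sub_norm_le (1 : ℂ) (a * q ^ j)

theorem qPoch_ne_zero {a q : ℂ} (ha : ‖a‖ < 1) (hq : ‖q‖ ≤ 1) (k : ℕ) :
    qPoch a q k ≠ 0 :=
  norm_pos_iff.1 <| (pow_pos (sub_pos.2 ha) k).trans_le (pow_le_norm_qPoch ha.le hq k)

theorem summable_pow_sq_sub_mul_pow {r : ℝ} (hr0 : 0 ≤ r) (hr1 : r < 1) (y : ℝ) :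
    Summable fun k : ℕ => r ^ (k ^ 2 - k) * y ^ k := by
  have hratio : Tendsto (fun k : ℕ => (r ^ 2) ^ k * ‖y‖) atTop (𝓝 0) := by
    simpa using (tendsto_pow_atTop_nhds_zero_of_lt_one (by positivity)
      (pow_lt_one₀ hr0 hr1 two_ne_zero)).mul_const ‖y‖
  refine summable_of_ratio_norm_eventually_le (r := 1 / 2) (by norm_num) ?_
  filter_upwards [hratio.eventually_le_const (by norm_num : (0 : ℝ) < 1 / 2)] with k hk
  have hexp : (k + 1) ^ 2 - (k + 1) = (k ^ 2 - k) + 2 * k := by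
    have : k ≤ k ^ 2 := Nat.le_self_pow two_ne_zero k
    have : (k + 1) ^ 2 = k ^ 2 + 2 * k + 1 := by ring
    omega
  calc ‖r ^ ((k + 1) ^ 2 - (k + 1)) * y ^ (k + 1)‖
      = (r ^ 2) ^ k * ‖y‖ * ‖r ^ (k ^ 2 - k) * y ^ k‖ := by
        simp only [hexp, norm_mul, norm_pow, Real.norm_of_nonneg hr0]
        ring
    _ ≤ 1 / 2 * ‖r ^ (k ^ 2 - k) * y ^ k‖ := by gcongr

theorem tsum_comp_succ_snd {α β : Type*} [AddCommMonoid α] [TopologicalSpace α]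
    {g : β × ℕ → α} (hg : ∀ b, g (b, 0) = 0) :
    ∑' p : β × ℕ, g (p.1, p.2 + 1) = ∑' p, g p := by
  refine Function.Injective.tsum_eq (g := fun p : β × ℕ => (p.1, p.2 + 1))
    (fun p p' h => by simpa [Prod.ext_iff] using h) fun ⟨b, n⟩ hp => ?_
  cases n with
  | zero => exact absurd (hg b) hp
  | succ n => exact ⟨(b, n), rfl⟩

def doubleExp (m n : ℕ) : ℕ := 2 * m ^ 2 + 2 * m * n + n ^ 2 - m - n

section doubleExp

variable (m n : ℕ)

theorem doubleExp_add_self : doubleExp m n + m + n = 2 * m ^ 2 + 2 * m * n + n ^ 2 := by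
  have := Nat.le_self_pow two_ne_zero m
  have := Nat.le_self_pow two_ne_zero n
  unfold doubleExp
  omega

theorem doubleExp_succ_right : doubleExp m (n + 1) = doubleExp m n + (2 * m + 2 * n) := by
  have h := doubleExp_add_self m n
  have : 2 * m ^ 2 + 2 * m * (n + 1) + (n + 1) ^ 2
      = 2 * m ^ 2 + 2 * m * n + n ^ 2 + 2 * m + 2 * n + 1 := by ring
  unfold doubleExp at *
  omega

theorem doubleExp_add_two_mul_right :
    2 * m ^ 2 + 2 * m * n + n ^ 2 + n - m = doubleExp m n + 2 * n := by
  have := doubleExp_add_self m n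
  omega

theorem sq_sub_add_sq_sub_le_doubleExp : (m ^ 2 - m) + (n ^ 2 - n) ≤ doubleExp m n := by
  have := doubleExp_add_self m n
  have := Nat.le_self_pow two_ne_zero m
  have := Nat.le_self_pow two_ne_zero n
  omega

end doubleExp

noncomputable def doubleTerm (q : ℂ) (p : ℕ × ℕ) : ℂ :=
  q ^ doubleExp p.1 p.2 / (qPoch (q ^ 2) (q ^ 2) p.1 * qPoch (q ^ 2) (q ^ 2) p.2)

section doubleTerm

variable {q : ℂ} (hq : ‖q‖ < 1)
include hq

theorem norm_doubleTerm_le (p : ℕ × ℕ) :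
    ‖doubleTerm q p‖ ≤ (‖q‖ ^ (p.1 ^ 2 - p.1) * ((1 - ‖q‖ ^ 2)⁻¹) ^ p.1) *
      (‖q‖ ^ (p.2 ^ 2 - p.2) * ((1 - ‖q‖ ^ 2)⁻¹) ^ p.2) := by
  have hq2 : ‖q ^ 2‖ < 1 := by rw [norm_pow]; exact pow_lt_one₀ (norm_nonneg q) hq two_ne_zero
  have hP : ∀ k, (1 - ‖q‖ ^ 2) ^ k ≤ ‖qPoch (q ^ 2) (q ^ 2) k‖ := by
    simpa only [norm_pow] using pow_le_norm_qPoch hq2.le hq2.le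
  have hpos : 0 < 1 - ‖q‖ ^ 2 := by rw [← norm_pow]; exact sub_pos.2 hq2
  calc ‖doubleTerm q p‖
      = ‖q‖ ^ doubleExp p.1 p.2
          / (‖qPoch (q ^ 2) (q ^ 2) p.1‖ * ‖qPoch (q ^ 2) (q ^ 2) p.2‖) := by
        rw [doubleTerm, norm_div, norm_mul, norm_pow]
    _ ≤ ‖q‖ ^ ((p.1 ^ 2 - p.1) + (p.2 ^ 2 - p.2))
          / ((1 - ‖q‖ ^ 2) ^ p.1 * (1 - ‖q‖ ^ 2) ^ p.2) :=
        div_le_div₀ (by positivity)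
          (pow_le_pow_of_le_one (norm_nonneg q) hq.le (sq_sub_add_sq_sub_le_doubleExp _ _))
          (by positivity) (mul_le_mul (hP _) (hP _) (by positivity) (norm_nonneg _))
    _ = _ := by rw [pow_add, inv_pow, inv_pow]; field_simp

theorem summable_norm_doubleTerm : Summable fun p => ‖doubleTerm q p‖ := by
  have h := summable_pow_sq_sub_mul_pow (norm_nonneg q) hq (1 - ‖q‖ ^ 2)⁻¹
  have hq2 : ‖q‖ ^ 2 < 1 := pow_lt_one₀ (norm_nonneg q) hq two_ne_zero
  refine Summable.of_nonneg_of_le (fun _ => norm_nonneg _) (norm_doubleTerm_le hq)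
    (h.mul_of_nonneg h (fun k => ?_) fun k => ?_) <;>
  · have : 0 ≤ (1 - ‖q‖ ^ 2)⁻¹ := inv_nonneg.2 (by linarith)
    positivity

theorem doubleTerm_succ_right_mul (m n : ℕ) :
    doubleTerm q (m, n + 1) * (1 - q ^ (2 * (n + 1)))
      = doubleTerm q (m, n) * q ^ (2 * m + 2 * n) := by
  have hq2 : ‖q ^ 2‖ < 1 := by rw [norm_pow]; exact pow_lt_one₀ (norm_nonneg q) hq two_ne_zero
  have hfac : 1 - q ^ 2 * (q ^ 2) ^ n ≠ 0 := by
    have : ‖q ^ 2 * (q ^ 2) ^ n‖ < 1 := by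
      rw [← pow_succ', norm_pow]
      exact pow_lt_one₀ (norm_nonneg _) hq2 n.succ_ne_zero
    exact sub_ne_zero.2 fun h => by simp [← h] at this
  have hP := qPoch_ne_zero hq2 hq2.le
  simp only [doubleTerm, doubleExp_succ_right]
  rw [qPoch_succ]
  field_simp
  ring

end doubleTerm

/-- a little Göllnitz related double-series identity. -/
theorem stmt13 (q : ℂ) (hq : ‖q‖ < 1) :
    ∑' p : ℕ × ℕ,
        q ^ (2 * p.1 ^ 2 + 2 * p.1 * p.2 + p.2 ^ 2 - p.1 - p.2)
          * (1 - q ^ (2 * p.1 + 2 * p.2))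
          / (qPoch (q ^ 2) (q ^ 2) p.1 * qPoch (q ^ 2) (q ^ 2) p.2)
      = ∑' p : ℕ × ℕ,
          q ^ (2 * p.1 ^ 2 + 2 * p.1 * p.2 + p.2 ^ 2 + p.2 - p.1)
          / (qPoch (q ^ 2) (q ^ 2) p.1 * qPoch (q ^ 2) (q ^ 2) p.2) := by
  have hS : ∀ k : ℕ × ℕ → ℕ, Summable fun p => doubleTerm q p * q ^ k p := fun k =>
    .of_norm_bounded (summable_norm_doubleTerm hq) fun p => by
      rw [norm_mul, norm_pow]
      exact mul_le_of_le_one_right (norm_nonneg _) (pow_le_one₀ (norm_nonneg q) hq.le)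
  have hS₀ : Summable (doubleTerm q) := (summable_norm_doubleTerm hq).of_norm
  have htel : ∑' p, doubleTerm q p * q ^ (2 * p.1 + 2 * p.2)
      = ∑' p, doubleTerm q p * (1 - q ^ (2 * p.2)) := by
    rw [← tsum_comp_succ_snd (g := fun p => doubleTerm q p * (1 - q ^ (2 * p.2))) (by simp)]
    exact tsum_congr fun p => (doubleTerm_succ_right_mul hq p.1 p.2).symm
  calc _ = ∑' p, doubleTerm q p * (1 - q ^ (2 * p.1 + 2 * p.2)) :=
        tsum_congr fun p => mul_div_right_comm _ _ _
    _ = ∑' p, doubleTerm q p - ∑' p, doubleTerm q p * (1 - q ^ (2 * p.2)) := by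
        rw [← htel, ← hS₀.tsum_sub (hS _)]
        simp only [mul_sub, mul_one]
    _ = ∑' p, doubleTerm q p * q ^ (2 * p.2) := by
        simp only [mul_sub, mul_one]
        rw [hS₀.tsum_sub (hS _), sub_sub_cancel]
    _ = _ := tsum_congr fun p => by
        rw [doubleExp_add_two_mul_right, pow_add, mul_div_right_comm]
        rfl
end
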